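/- arXiv:1703.05151 — 4 statements merged into one kernel-verified Lean document; each statement's English description precedes it below -/
import Mathlib

section
/- Let q ≥ 2 with conjugate exponent q' = q/(q-1), and let c, L₀ > 0. If the inequality l - (c/q'^(1/q')) · l^(1/q) + L₀/q' ≤ 0 holds for some real l ≥ 0, then c ≥ L₀^(1/q') · q'^(1/q') · q^(1/q). -/
/-!
Young's inequality applied to (q l)^(1/q) and c / (q'^(1/q') q^(1/q)) bounds the middle term by
l plus a constant, so the hypothesis forces L₀ · q' · q^(q'/q) ≤ c^q'; taking q'-th roots of this
gives the bound on c.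
-/
theorem Real.mul_rpow_one_div_le_add {p q x b : ℝ} (hpq : p.HolderConjugate q) (hx : 0 ≤ x)
    (hb : 0 ≤ b) : b * x ^ (1 / p) ≤ x + b ^ q / (q * p ^ (q / p)) := by
  have hp := hpq.pos
  have hp' : 0 < p ^ (1 / p) := by positivity
  have young := Real.young_inequality_of_nonneg (by positivity : 0 ≤ (p * x) ^ (1 / p))
    (div_nonneg hb hp'.le) hpq
  have hlhs : (p * x) ^ (1 / p) * (b / p ^ (1 / p)) = b * x ^ (1 / p) := by
    rw [Real.mul_rpow hp.le hx]; field_simp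
  have hfirst : ((p * x) ^ (1 / p)) ^ p / p = x := by
    rw [← Real.rpow_mul (by positivity), one_div_mul_cancel hp.ne', Real.rpow_one]; field_simp
  have hsecond : (b / p ^ (1 / p)) ^ q / q = b ^ q / (q * p ^ (q / p)) := by
    rw [Real.div_rpow hb hp'.le, ← Real.rpow_mul hp.le, one_div_mul_eq_div, div_div, mul_comm]
  rwa [hlhs, hfirst, hsecond] at young

theorem stmt_3 (q q' c L0 l : ℝ) (hq : 2 ≤ q) (hq' : q' = q / (q - 1))
    (hc : 0 < c) (hL0 : 0 < L0) (hl : 0 ≤ l)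
    (hineq : l - (c / q' ^ (1 / q')) * l ^ (1 / q) + L0 / q' ≤ 0) :
    c ≥ L0 ^ (1 / q') * q' ^ (1 / q') * q ^ (1 / q) := by
  have hconj : q.HolderConjugate q' :=
    (Real.holderConjugate_iff_eq_conjExponent (by linarith)).2 hq'
  have hq0 := hconj.pos
  have hq'0 := hconj.symm.pos
  have hcoef : (c / q' ^ (1 / q')) ^ q' = c ^ q' / q' := by
    rw [Real.div_rpow hc.le (by positivity), one_div, Real.rpow_inv_rpow hq'0.le hq'0.ne']
  have young := Real.mul_rpow_one_div_le_add hconj hl (by positivity : 0 ≤ c / q' ^ (1 / q'))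
  rw [hcoef] at young
  have key : L0 * q' * q ^ (q' / q) ≤ c ^ q' := by
    have h : L0 / q' ≤ c ^ q' / q' / (q' * q ^ (q' / q)) := by linarith
    rw [div_div, div_le_div_iff₀ hq'0 (by positivity)] at h
    nlinarith [mul_pos hq'0 hq'0]
  have hroot : (L0 * q' * q ^ (q' / q)) ^ (1 / q') =
      L0 ^ (1 / q') * q' ^ (1 / q') * q ^ (1 / q) := by
    rw [Real.mul_rpow (by positivity) (by positivity), Real.mul_rpow hL0.le hq'0.le,
      ← Real.rpow_mul hq0.le, div_mul_div_comm, mul_one, mul_comm q, ← div_div,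
      div_self hq'0.ne']
  rw [ge_iff_le, ← hroot, one_div, Real.rpow_inv_le_iff_of_pos (by positivity) hc.le hq'0]
  exact key
end

section
/- Let 2 ≤ q < p and L₊ > 0 with L₊ ≤ p + q - 2. Set c̄ = (L₊^((q-1)/q) · q/(q-1)) · (p+q-2)^(1/q) and β̄ = (L₊/(p+q-2))^(1/q). Then β̄ ≤ 1 and ((p-1)/(q-1))β̄^p + β̄^q - c̄·β̄ + L₊ ≤ 0. -/
/-!
Put `x = L / (p + q - 2)`, so that `x ∈ (0, 1]` and `β̄ = x ^ (1 / q)`. Then `β̄ ^ q = x`,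
`c̄ β̄ = L q / (q - 1)` and, as `p ≥ q` and `x ≤ 1`, `β̄ ^ p = x ^ (p / q) ≤ x`. Hence the left-hand
side is at most `(p - 1) / (q - 1) * x + x - L q / (q - 1) + L`, which vanishes by the choice of `x`.
-/

namespace Real

lemma rpow_one_div_rpow_le_self {x p q : ℝ} (hx₀ : 0 ≤ x) (hx₁ : x ≤ 1) (hq : 0 < q)
    (hqp : q ≤ p) : (x ^ (1 / q)) ^ p ≤ x := by
  rw [← rpow_mul hx₀, one_div_mul_eq_div]
  exact rpow_le_self_of_le_one hx₀ hx₁ ((one_le_div hq).mpr hqp)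

lemma rpow_sub_one_div_mul_rpow_one_div_mul_div_rpow {L A q : ℝ} (hL : 0 < L) (hA : 0 < A)
    (hq : q ≠ 0) : L ^ ((q - 1) / q) * A ^ (1 / q) * (L / A) ^ (1 / q) = L := by
  have hA' : A ^ (1 / q) ≠ 0 := (rpow_pos_of_pos hA _).ne'
  rw [div_rpow hL.le hA.le, mul_assoc, mul_div_cancel₀ _ hA', ← rpow_add hL, ← add_div,
    sub_add_cancel, div_self hq, rpow_one]

end Real

theorem stmt_5 (p q L : ℝ) (hq : 2 ≤ q) (hqp : q < p)
    (hL : 0 < L) (hLle : L ≤ p + q - 2) :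
    ((L / (p + q - 2)) ^ (1 / q) : ℝ) ≤ 1 ∧
    ((p - 1) / (q - 1)) * ((L / (p + q - 2)) ^ (1 / q)) ^ p
      + ((L / (p + q - 2)) ^ (1 / q)) ^ q
      - ((L ^ ((q - 1) / q) * q / (q - 1)) * (p + q - 2) ^ (1 / q))
        * (L / (p + q - 2)) ^ (1 / q) + L ≤ 0 := by
  have hA : 0 < p + q - 2 := by linarith
  have hq₀ : 0 < q := by linarith
  have hq₁ : 0 < q - 1 := by linarith
  have hx₀ : 0 ≤ L / (p + q - 2) := by positivity
  have hx₁ : L / (p + q - 2) ≤ 1 := (div_le_one hA).mpr hLle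
  refine ⟨Real.rpow_le_one hx₀ hx₁ (by positivity), ?_⟩
  have hβq : ((L / (p + q - 2)) ^ (1 / q)) ^ q = L / (p + q - 2) := by
    rw [one_div, Real.rpow_inv_rpow hx₀ hq₀.ne']
  have hcβ : (L ^ ((q - 1) / q) * q / (q - 1)) * (p + q - 2) ^ (1 / q)
      * (L / (p + q - 2)) ^ (1 / q) = L * q / (q - 1) := by
    have := Real.rpow_sub_one_div_mul_rpow_one_div_mul_div_rpow hL hA hq₀.ne'
    linear_combination q / (q - 1) * this
  have hβp := Real.rpow_one_div_rpow_le_self hx₀ hx₁ hq₀ hqp.le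
  have hlin : (p - 1) / (q - 1) * (L / (p + q - 2)) + L / (p + q - 2) - L * q / (q - 1) + L
      = 0 := by
    field_simp
    ring
  rw [hβq, hcβ, ← hlin]
  gcongr ?_ + _ - _ + _
  exact mul_le_mul_of_nonneg_left hβp (div_nonneg (by linarith) hq₁.le)
end

section
/- Let 2 ≤ q < p and L₊ ≥ ((p-1)/(q-1))(p+q-2). Set c̄ = (L₊^((p-1)/p) · p / ((q-1)^(1/p)(p-1)^((p-1)/p))) · (p+q-2)^(1/p) and β̄ = (c̄(q-1)/(p(p+q-2)))^(1/(p-1)). Then β̄ ≥ 1 and ((p-1)/(q-1))β̄^p + β̄^q - c̄·β̄ + L₊ ≤ 0. -/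
/-!
With `A = L / (p - 1)` and `B = (p + q - 2) / (q - 1)` one has `(p - 1) / (q - 1) = B - 1`,
`c̄ = p A ^ (1 - 1/p) B ^ (1/p)` and `β̄ = x ^ (1/p)` for `x = A / B`, and the hypothesis on `L` is
`x ≥ 1`. Hence `β̄ ≥ 1`, `β̄ ^ p = x` and `c̄ β̄ = p B x`. Since `β̄ ≥ 1` and `q ≤ p`, the term `β̄ ^ q`
is dominated by `β̄ ^ p`, and the resulting upper bound `(B - 1) x + x - p B x + (p - 1) B x`
vanishes identically.
-/

open Real

lemma Real.rpow_mul_rpow_of_add_eq_one {A B a b : ℝ} (hA : 0 ≤ A) (hB : 0 < B) (hab : a + b = 1) :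
    A ^ a * B ^ b = B * (A / B) ^ a := by
  rw [eq_sub_of_add_eq' hab, rpow_sub hB, rpow_one, div_rpow hA hB.le]
  ring

theorem one_le_and_value_nonpos_at_critical {p q A B c β : ℝ} (hp : 1 < p) (hqp : q ≤ p)
    (hB : 0 < B) (hBA : B ≤ A)
    (hc : c = p * A ^ ((p - 1) / p) * B ^ (1 / p))
    (hβ : β = (c / (p * B)) ^ (1 / (p - 1))) :
    1 ≤ β ∧ (B - 1) * β ^ p + β ^ q - c * β + (p - 1) * A ≤ 0 := by
  have hp0 : 0 < p := by linarith
  set x := A / B with hx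
  have hx1 : 1 ≤ x := (one_le_div hB).mpr hBA
  have hx0 : 0 ≤ x := by linarith
  have hexp : (p - 1) / p + 1 / p = 1 := by field_simp; ring
  have hcx : c = p * B * x ^ ((p - 1) / p) := by
    rw [hc, mul_assoc, rpow_mul_rpow_of_add_eq_one (by linarith) hB hexp, mul_assoc]
  have hβx : β = x ^ (1 / p) := by
    rw [hβ, hcx, mul_div_cancel_left₀ _ (by positivity), ← rpow_mul hx0]
    congr 1
    field_simp [(by linarith : p - 1 ≠ 0)]
  have hβ1 : 1 ≤ β := hβx ▸ one_le_rpow hx1 (by positivity)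
  have hβp : β ^ p = x := by
    rw [hβx, ← rpow_mul hx0, one_div_mul_cancel hp0.ne', rpow_one]
  have hβq : β ^ q ≤ β ^ p := rpow_le_rpow_of_exponent_le hβ1 hqp
  have hcβ : c * β = p * B * x := by
    rw [hcx, hβx, mul_assoc, ← rpow_add' hx0 (by rw [hexp]; exact one_ne_zero), hexp, rpow_one]
  have hA : A = B * x := by rw [hx, mul_div_cancel₀ _ hB.ne']
  refine ⟨hβ1, ?_⟩
  rw [hcβ, hA, ← hβp]
  linarith

theorem stmt_7 (p q L : ℝ) (hq : 2 ≤ q) (hqp : q < p)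
    (hL : ((p - 1) / (q - 1)) * (p + q - 2) ≤ L)
    (c β : ℝ)
    (hc : c = (L ^ ((p - 1) / p) * p / ((q - 1) ^ (1 / p) * (p - 1) ^ ((p - 1) / p)))
        * (p + q - 2) ^ (1 / p))
    (hβ : β = (c * (q - 1) / (p * (p + q - 2))) ^ (1 / (p - 1))) :
    1 ≤ β ∧
    ((p - 1) / (q - 1)) * β ^ p + β ^ q - c * β + L ≤ 0 := by
  have hq1 : 0 < q - 1 := by linarith
  have hp1 : 0 < p - 1 := by linarith
  have hD : 0 < p + q - 2 := by linarith
  have hL0 : 0 ≤ L := le_trans (by positivity) hL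
  have hBA : (p + q - 2) / (q - 1) ≤ L / (p - 1) := by
    rw [le_div_iff₀ hp1]
    exact le_of_eq_of_le (by ring) hL
  have hc' : c = p * (L / (p - 1)) ^ ((p - 1) / p) * ((p + q - 2) / (q - 1)) ^ (1 / p) := by
    rw [hc, div_rpow hL0 hp1.le, div_rpow hD.le hq1.le]
    field_simp
  have hβ' : β = (c / (p * ((p + q - 2) / (q - 1)))) ^ (1 / (p - 1)) := by
    rw [hβ]
    congr 1
    field_simp
  have hB1 : (p + q - 2) / (q - 1) - 1 = (p - 1) / (q - 1) := by field_simp; ring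
  have hAL : (p - 1) * (L / (p - 1)) = L := mul_div_cancel₀ L hp1.ne'
  have := one_le_and_value_nonpos_at_critical (by linarith) hqp.le (by positivity) hBA hc' hβ'
  rwa [hB1, hAL] at this
end

section
/- Let 2 ≤ q < p, s₀ = ((q-1)/(p-1))^(1/(p-q)), and q' = q/(q-1). If c ≤ q·((q-1)/(p-1))^((q-1)/(p-q)) and c ≥ L₊^(1/q')·q'^(1/q')·q^(1/q) for some L₊ > 0, then β̄ := (c/q)^(1/(q-1)) satisfies β̄ ≤ s₀ and β̄^q - c·β̄ + L₊ ≤ 0. -/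
/-!
With `β = (c/q)^(1/(q-1))` the critical point of `t ↦ t^q - c t`, the critical value is
`β^q - cβ = -(q-1)(c/q)^{q'}`, so the second claim is `L ≤ (q-1)(c/q)^{q'}`; raising the lower
bound on `c` to the power `q'` turns it into exactly this. The first claim is the upper bound on `c`
raised to the power `1/(q-1)`.
-/

open Real

lemma rpow_one_div_le_rpow_one_div_of_le_rpow_div {x a k m : ℝ} (hx : 0 ≤ x) (ha : 0 ≤ a)
    (hk : 0 < k) (h : x ≤ a ^ (k / m)) : x ^ (1 / k) ≤ a ^ (1 / m) := by
  rw [one_div k, rpow_inv_le_iff_of_pos hx (by positivity) hk, ← rpow_mul ha]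
  convert h using 2
  ring

namespace Real.HolderConjugate

variable {q q' : ℝ}

lemma rpow_sub_mul_critical_point_eq (h : q.HolderConjugate q') {c : ℝ} (hc : 0 ≤ c) :
    ((c / q) ^ (1 / (q - 1))) ^ q - c * (c / q) ^ (1 / (q - 1)) = -((q - 1) * (c / q) ^ q') := by
  have hq := h.pos
  have hx : 0 ≤ c / q := by positivity
  have hexp : 1 / (q - 1) = q' - 1 := by
    rw [h.conjugate_eq]
    field_simp [h.sub_one_ne_zero]
    ring
  have hpow : ((c / q) ^ (1 / (q - 1))) ^ q = (c / q) ^ q' := by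
    rw [← rpow_mul hx, hexp, h.symm.sub_one_mul_conj]
  have hmul : c * (c / q) ^ (1 / (q - 1)) = q * (c / q) ^ q' := by
    have hne : 1 + (q' - 1) ≠ 0 := by rw [add_sub_cancel]; exact h.symm.ne_zero
    calc c * (c / q) ^ (1 / (q - 1)) = q * (c / q * (c / q) ^ (q' - 1)) := by
          rw [hexp]; field_simp
      _ = q * (c / q) ^ q' := by rw [← rpow_one_add' hx hne, add_sub_cancel]
  rw [hpow, hmul]
  ring

lemma mul_rpow_one_div_conj_div_rpow_conj (h : q.HolderConjugate q') {L : ℝ} (hL : 0 ≤ L) :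
    (L ^ (1 / q') * q' ^ (1 / q') * q ^ (1 / q) / q) ^ q' = L / (q - 1) := by
  have hq := h.pos
  have hq' := h.symm.pos
  rw [div_rpow (by positivity) hq.le, mul_rpow (by positivity) (by positivity),
    mul_rpow (by positivity) (by positivity), ← rpow_mul hL, ← rpow_mul hq'.le,
    ← rpow_mul hq.le, one_div_mul_cancel h.symm.ne_zero, rpow_one, rpow_one, mul_div_assoc,
    ← rpow_sub hq]
  have hexp : 1 / q * q' - q' = -1 := by
    rw [h.conjugate_eq]
    field_simp [h.sub_one_ne_zero]
    ring
  rw [hexp, rpow_neg_one, h.conjugate_eq]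
  field_simp

lemma le_sub_one_mul_div_rpow_conj_of_le (h : q.HolderConjugate q') {L c : ℝ}
    (hL : 0 ≤ L) (hc : L ^ (1 / q') * q' ^ (1 / q') * q ^ (1 / q) ≤ c) :
    L ≤ (q - 1) * (c / q) ^ q' := by
  have hq := h.pos
  have hq' := h.symm.pos
  have hpow := rpow_le_rpow (by positivity) (div_le_div_of_nonneg_right hc hq.le) h.symm.nonneg
  rw [mul_rpow_one_div_conj_div_rpow_conj h hL, div_le_iff₀' h.sub_one_pos] at hpow
  exact hpow

end Real.HolderConjugate

theorem stmt_19 (p q q' s₀ L c : ℝ) (hq : 2 ≤ q) (hqp : q < p)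
    (hq' : q' = q / (q - 1))
    (hs₀ : s₀ = ((q - 1) / (p - 1)) ^ (1 / (p - q)))
    (hL : 0 < L)
    (hc1 : c ≤ q * ((q - 1) / (p - 1)) ^ ((q - 1) / (p - q)))
    (hc2 : L ^ (1 / q') * q' ^ (1 / q') * q ^ (1 / q) ≤ c) :
    (c / q) ^ (1 / (q - 1)) ≤ s₀ ∧
    ((c / q) ^ (1 / (q - 1))) ^ q - c * (c / q) ^ (1 / (q - 1)) + L ≤ 0 := by
  have hconj : q.HolderConjugate q' := (holderConjugate_iff_eq_conjExponent (by linarith)).2 hq'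
  have hq0 : 0 < q := hconj.pos
  have hq'0 : 0 < q' := hconj.symm.pos
  have hc : 0 < c := lt_of_lt_of_le (by positivity) hc2
  constructor
  · rw [hs₀]
    refine rpow_one_div_le_rpow_one_div_of_le_rpow_div (by positivity)
      (div_nonneg (by linarith) (by linarith)) (by linarith) ?_
    rwa [div_le_iff₀' hq0]
  · rw [hconj.rpow_sub_mul_critical_point_eq hc.le]
    linarith [hconj.le_sub_one_mul_div_rpow_conj_of_le hL.le hc2]
end
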